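/- arXiv:2211.03916 — 2 statements merged into one kernel-verified Lean document; each statement's English description precedes it below -/
import Mathlib

section
/- There exists a universal constant C_win > 0 such that for every natural numbers w ≥ 1, k, ℓ with w < k and w < ℓ, and every k×k×ℓ×ℓ array A with nonnegative entries summing to 1, it holds that ‖A^{+w} − A^{−w}‖₁ ≤ C_win/w. -/
open Finset

/-- The 1-dimensional window `Win^{w,ℓ}(i) = {i' ∈ {1,…,ℓ} : |i' − i| ≤ w}`. -/
def Win (w l i : ℕ) : Finset ℕ :=
  (Finset.Icc 1 l).filter fun i' => i' ≤ i + w ∧ i ≤ i' + w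

/-- The 4-dimensional window
`Win^{w,k,ℓ}(a,b,i,j) = Win^{w,k}(a) × Win^{w,k}(b) × Win^{w,ℓ}(i) × Win^{w,ℓ}(j)`. -/
def Win4 (w k l a b i j : ℕ) : Finset (ℕ × ℕ × ℕ × ℕ) :=
  Win w k a ×ˢ Win w k b ×ˢ Win w l i ×ˢ Win w l j

/-- All index quadruples `{1,…,k}² × {1,…,ℓ}²`. -/
def Icc4 (k l : ℕ) : Finset (ℕ × ℕ × ℕ × ℕ) :=
  Finset.Icc 1 k ×ˢ Finset.Icc 1 k ×ˢ Finset.Icc 1 l ×ˢ Finset.Icc 1 l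

/-- The normalization factor `ν^{∼w,ℓ}(i,j) = 1/|Win^{w,ℓ}(i,j)|`. -/
noncomputable def nu2 (w l i j : ℕ) : ℝ := 1 / ((Win w l i ×ˢ Win w l j).card : ℝ)

/-- The smoothed matrix `M^{∼w}`. -/
noncomputable def smooth2 (w l : ℕ) (M : ℕ → ℕ → ℝ) (i j : ℕ) : ℝ :=
  ∑ p ∈ Win w l i ×ˢ Win w l j, nu2 w l p.1 p.2 * M p.1 p.2

/-- The normalization factor `ν^{∼w,k,ℓ}(a,b,i,j) = 1/|Win^{w,k,ℓ}(a,b,i,j)|`. -/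
noncomputable def nu4 (w k l : ℕ) (q : ℕ × ℕ × ℕ × ℕ) : ℝ :=
  1 / ((Win4 w k l q.1 q.2.1 q.2.2.1 q.2.2.2).card : ℝ)

/-- The smoothed array `A^{∼w}`. -/
noncomputable def smooth4 (w k l : ℕ) (A : ℕ × ℕ × ℕ × ℕ → ℝ) (q : ℕ × ℕ × ℕ × ℕ) : ℝ :=
  ∑ q' ∈ Win4 w k l q.1 q.2.1 q.2.2.1 q.2.2.2, nu4 w k l q' * A q'

/-- The lower-bound normalization factor `ν^{−w,k,ℓ}`: the minimum of `ν^{∼w,k,ℓ}` over the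
`1`-window around the given quadruple. -/
noncomputable def nuMinus (w k l : ℕ) (q : ℕ × ℕ × ℕ × ℕ) : ℝ :=
  if h : (Win4 1 k l q.1 q.2.1 q.2.2.1 q.2.2.2).Nonempty then
    (Win4 1 k l q.1 q.2.1 q.2.2.1 q.2.2.2).inf' h (nu4 w k l)
  else 0

/-- The upper-bound normalization factor `ν^{+w,k,ℓ}`: the maximum of `ν^{∼w,k,ℓ}` over the
`1`-window around the given quadruple. -/
noncomputable def nuPlus (w k l : ℕ) (q : ℕ × ℕ × ℕ × ℕ) : ℝ :=
  if h : (Win4 1 k l q.1 q.2.1 q.2.2.1 q.2.2.2).Nonempty then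
    (Win4 1 k l q.1 q.2.1 q.2.2.1 q.2.2.2).sup' h (nu4 w k l)
  else 0

/-- The lower-bound array `A^{−w}`. -/
noncomputable def AMinus (w k l : ℕ) (A : ℕ × ℕ × ℕ × ℕ → ℝ) (q : ℕ × ℕ × ℕ × ℕ) : ℝ :=
  ∑ q' ∈ Win4 (w - 1) k l q.1 q.2.1 q.2.2.1 q.2.2.2, nuMinus w k l q' * A q'

/-- The upper-bound array `A^{+w}`. -/
noncomputable def APlus (w k l : ℕ) (A : ℕ × ℕ × ℕ × ℕ → ℝ) (q : ℕ × ℕ × ℕ × ℕ) : ℝ :=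
  ∑ q' ∈ Win4 (w + 1) k l q.1 q.2.1 q.2.2.1 q.2.2.2, nuPlus w k l q' * A q'

/-- The projection of a `k×k×ℓ×ℓ` array onto its last two coordinates. -/
noncomputable def Proj (k : ℕ) (A : ℕ × ℕ × ℕ × ℕ → ℝ) (i j : ℕ) : ℝ :=
  ∑ a ∈ Finset.Icc 1 k, ∑ b ∈ Finset.Icc 1 k, A (a, b, i, j)

/-- Entrywise 1-norm distance between `ℓ×ℓ` matrices. -/
noncomputable def l1Mat (l : ℕ) (M N : ℕ → ℕ → ℝ) : ℝ :=
  ∑ i ∈ Finset.Icc 1 l, ∑ j ∈ Finset.Icc 1 l, |M i j - N i j|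

/-- Entrywise 1-norm distance between `k×k×ℓ×ℓ` arrays. -/
noncomputable def l1Arr (k l : ℕ) (A B : ℕ × ℕ × ℕ × ℕ → ℝ) : ℝ :=
  ∑ q ∈ Icc4 k l, |A q - B q|

lemma Win_eq_Icc (w l i : ℕ) : Win w l i = Finset.Icc (max 1 (i - w)) (min l (i + w)) := by
  ext x; simp [Win, Finset.mem_Icc]; omega

lemma card_Win (w l i : ℕ) : (Win w l i).card = min l (i + w) + 1 - max 1 (i - w) := by
  rw [Win_eq_Icc, Nat.card_Icc]

lemma mem_Win {w l i x : ℕ} : x ∈ Win w l i ↔ 1 ≤ x ∧ x ≤ l ∧ x ≤ i + w ∧ i ≤ x + w := by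
  simp [Win, Finset.mem_Icc, and_assoc]

lemma mem_Win4 {w k l a b i j : ℕ} {q : ℕ × ℕ × ℕ × ℕ} :
    q ∈ Win4 w k l a b i j ↔
      q.1 ∈ Win w k a ∧ q.2.1 ∈ Win w k b ∧ q.2.2.1 ∈ Win w l i ∧ q.2.2.2 ∈ Win w l j := by
  simp [Win4, Finset.mem_product, and_assoc]

lemma mem_Icc4 {k l : ℕ} {q : ℕ × ℕ × ℕ × ℕ} :
    q ∈ Icc4 k l ↔ (1 ≤ q.1 ∧ q.1 ≤ k) ∧ (1 ≤ q.2.1 ∧ q.2.1 ≤ k) ∧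
      (1 ≤ q.2.2.1 ∧ q.2.2.1 ≤ l) ∧ (1 ≤ q.2.2.2 ∧ q.2.2.2 ≤ l) := by
  simp [Icc4, Finset.mem_product, Finset.mem_Icc, and_assoc]

lemma card_Win4 (w k l a b i j : ℕ) :
    (Win4 w k l a b i j).card =
      (Win w k a).card * ((Win w k b).card * ((Win w l i).card * (Win w l j).card)) := by
  simp [Win4]
lemma card_Win_lb {w l i : ℕ} (hi : 1 ≤ i) (hil : i ≤ l) (hwl : w < l) :
    w + 1 ≤ (Win w l i).card := by
  rw [card_Win]; omega

lemma card_Win_mono {w w' l i : ℕ} (h : w ≤ w') : (Win w l i).card ≤ (Win w' l i).card := by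
  rw [card_Win, card_Win]; omega

lemma card_Win_succ_le {w l i : ℕ} : (Win (w + 1) l i).card ≤ (Win w l i).card + 2 := by
  rw [card_Win, card_Win]; omega

lemma card_Win_pred_ge {w l i : ℕ} : (Win w l i).card ≤ (Win (w - 1) l i).card + 2 := by
  rw [card_Win, card_Win]; omega

lemma card_Win_nbr {w l i x : ℕ} (hx : x ∈ Win 1 l i) (hi : 1 ≤ i) (hil : i ≤ l) :
    (Win w l i).card ≤ (Win w l x).card + 1 ∧ (Win w l x).card ≤ (Win w l i).card + 1 := by
  rw [mem_Win] at hx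
  rw [card_Win, card_Win]; omega
lemma dim_bounds (w S Sp Sm : ℕ) (hw : 1 ≤ w) (hS : w + 1 ≤ S) (h1 : S ≤ Sp) (h2 : Sp ≤ S + 2)
    (h3 : Sm ≤ S) (h4 : S ≤ Sm + 2) :
    (1 ≤ (Sp:ℝ)/((S:ℝ)-1) ∧ (Sp:ℝ)/((S:ℝ)-1) ≤ 1 + 3/(w:ℝ)) ∧
    (0 ≤ (Sm:ℝ)/((S:ℝ)+1) ∧ (Sm:ℝ)/((S:ℝ)+1) ≤ 1 ∧ 1 - 3/(w:ℝ) ≤ (Sm:ℝ)/((S:ℝ)+1)) := by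
  have hw' : (1:ℝ) ≤ (w:ℝ) := by exact_mod_cast hw
  have hS' : (w:ℝ)+1 ≤ (S:ℝ) := by exact_mod_cast hS
  have h1' : (S:ℝ) ≤ (Sp:ℝ) := by exact_mod_cast h1
  have h2' : (Sp:ℝ) ≤ (S:ℝ) + 2 := by exact_mod_cast h2
  have h3' : (Sm:ℝ) ≤ (S:ℝ) := by exact_mod_cast h3
  have h4' : (S:ℝ) ≤ (Sm:ℝ) + 2 := by exact_mod_cast h4
  have hwpos : (0:ℝ) < (w:ℝ) := by linarith
  have hden1 : (0:ℝ) < (S:ℝ) - 1 := by linarith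
  have hden2 : (0:ℝ) < (S:ℝ) + 1 := by linarith
  refine ⟨⟨?_, ?_⟩, ?_, ?_, ?_⟩
  · rw [le_div_iff₀ hden1]; linarith
  · rw [div_le_iff₀ hden1]
    have key : (3:ℝ) ≤ 3 / (w:ℝ) * ((S:ℝ) - 1) := by
      rw [div_mul_eq_mul_div, le_div_iff₀ hwpos]; linarith
    nlinarith
  · positivity
  · rw [div_le_iff₀ hden2]; linarith
  · rw [le_div_iff₀ hden2]
    have key : (3:ℝ) ≤ 3 / (w:ℝ) * ((S:ℝ) + 1) := by
      rw [div_mul_eq_mul_div, le_div_iff₀ hwpos]; linarith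
    nlinarith

lemma prod4_bound (w u1 u2 u3 u4 l1 l2 l3 l4 : ℝ) (hw : 1 ≤ w)
    (hu1 : 1 ≤ u1) (hu1' : u1 ≤ 1 + 3/w) (hu2 : 1 ≤ u2) (hu2' : u2 ≤ 1 + 3/w)
    (hu3 : 1 ≤ u3) (hu3' : u3 ≤ 1 + 3/w) (hu4 : 1 ≤ u4) (hu4' : u4 ≤ 1 + 3/w)
    (hl1 : 0 ≤ l1) (hl1' : l1 ≤ 1) (hl1'' : 1 - 3/w ≤ l1)
    (hl2 : 0 ≤ l2) (hl2' : l2 ≤ 1) (hl2'' : 1 - 3/w ≤ l2)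
    (hl3 : 0 ≤ l3) (hl3' : l3 ≤ 1) (hl3'' : 1 - 3/w ≤ l3)
    (hl4 : 0 ≤ l4) (hl4' : l4 ≤ 1) (hl4'' : 1 - 3/w ≤ l4) :
    u1*u2*u3*u4 - l1*l2*l3*l4 ≤ 1000 / w := by
  have hwpos : (0:ℝ) < w := by linarith
  set t : ℝ := 3 / w with ht
  have htpos : 0 < t := by positivity
  have hup : u1*u2*u3*u4 ≤ (1+t)*(1+t)*(1+t)*(1+t) := by
    gcongr <;> linarith
  have hlp : 0 ≤ l1*l2*l3*l4 := by positivity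
  have htw : t * w = 3 := by rw [ht]; field_simp
  rcases le_or_gt t 1 with hcase | hcase
  · have hlo : (1-t)*(1-t)*(1-t)*(1-t) ≤ l1*l2*l3*l4 := by
      gcongr <;> linarith
    have : u1*u2*u3*u4 - l1*l2*l3*l4 ≤ 8*t + 8*t^3 := by nlinarith
    have h8 : 8*t + 8*t^3 ≤ 16*t := by nlinarith
    have h16 : 16*t ≤ 1000/w := by
      rw [le_div_iff₀ hwpos]; nlinarith
    linarith
  · -- t > 1, so w < 3
    have hw3 : w < 3 := by
      by_contra h
      push_neg at h
      have : t ≤ 1 := by rw [ht, div_le_one hwpos]; linarith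
      linarith
    have ht3 : t ≤ 3 := by rw [ht, div_le_iff₀ hwpos]; nlinarith
    have h256 : u1*u2*u3*u4 ≤ 4*4*4*4 := by gcongr <;> linarith
    have : (256:ℝ) ≤ 1000 / w := by
      rw [le_div_iff₀ hwpos]; nlinarith
    linarith
set_option maxHeartbeats 1600000 in
lemma key_bound (w k l : ℕ) (hw : 1 ≤ w) (hwk : w < k) (hwl : w < l)
    (q : ℕ × ℕ × ℕ × ℕ) (hq : q ∈ Icc4 k l) :
    nuPlus w k l q * ((Win4 (w+1) k l q.1 q.2.1 q.2.2.1 q.2.2.2).card : ℝ)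
      - nuMinus w k l q * ((Win4 (w-1) k l q.1 q.2.1 q.2.2.1 q.2.2.2).card : ℝ)
      ≤ 1000 / (w : ℝ) := by
  obtain ⟨a, b, i, j⟩ := q
  show nuPlus w k l (a, b, i, j) * ((Win4 (w+1) k l a b i j).card : ℝ)
      - nuMinus w k l (a, b, i, j) * ((Win4 (w-1) k l a b i j).card : ℝ) ≤ 1000 / (w : ℝ)
  simp only [Icc4, Finset.mem_product, Finset.mem_Icc] at hq
  obtain ⟨⟨ha1, ha2⟩, ⟨hb1, hb2⟩, ⟨hi1, hi2⟩, ⟨hj1, hj2⟩⟩ := hq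
  have hself : (a, b, i, j) ∈ Win4 1 k l a b i j := by
    simp [Win4, Win, Finset.mem_product]; omega
  have hN : (Win4 1 k l a b i j).Nonempty := ⟨_, hself⟩
  -- cardinalities at the center
  set Sa := (Win w k a).card with hSa
  set Sb := (Win w k b).card with hSb
  set Si := (Win w l i).card with hSi
  set Sj := (Win w l j).card with hSj
  have hSa1 : w + 1 ≤ Sa := card_Win_lb ha1 ha2 hwk
  have hSb1 : w + 1 ≤ Sb := card_Win_lb hb1 hb2 hwk
  have hSi1 : w + 1 ≤ Si := card_Win_lb hi1 hi2 hwl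
  have hSj1 : w + 1 ≤ Sj := card_Win_lb hj1 hj2 hwl
  have hda : (0:ℝ) < (Sa:ℝ) - 1 := by
    have : (2:ℕ) ≤ Sa := by omega
    have := (Nat.cast_le (α := ℝ)).2 this; push_cast at this; linarith
  have hdb : (0:ℝ) < (Sb:ℝ) - 1 := by
    have : (2:ℕ) ≤ Sb := by omega
    have := (Nat.cast_le (α := ℝ)).2 this; push_cast at this; linarith
  have hdi : (0:ℝ) < (Si:ℝ) - 1 := by
    have : (2:ℕ) ≤ Si := by omega
    have := (Nat.cast_le (α := ℝ)).2 this; push_cast at this; linarith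
  have hdj : (0:ℝ) < (Sj:ℝ) - 1 := by
    have : (2:ℕ) ≤ Sj := by omega
    have := (Nat.cast_le (α := ℝ)).2 this; push_cast at this; linarith
  set Q : ℝ := ((Sa:ℝ)-1) * (((Sb:ℝ)-1) * (((Si:ℝ)-1) * ((Sj:ℝ)-1))) with hQ
  set R : ℝ := ((Sa:ℝ)+1) * (((Sb:ℝ)+1) * (((Si:ℝ)+1) * ((Sj:ℝ)+1))) with hR
  have hQpos : 0 < Q := by rw [hQ]; positivity
  have hRpos : 0 < R := by rw [hR]; positivity
  -- bound nuPlus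
  have hplus : nuPlus w k l (a, b, i, j) ≤ 1 / Q := by
    rw [nuPlus, dif_pos hN]
    apply Finset.sup'_le
    intro q' hq'
    rw [mem_Win4] at hq'
    obtain ⟨hqa, hqb, hqi, hqj⟩ := hq'
    rw [nu4, card_Win4]
    apply one_div_le_one_div_of_le hQpos
    push_cast
    have h1 := (card_Win_nbr (w := w) hqa ha1 ha2).1
    have h2 := (card_Win_nbr (w := w) hqb hb1 hb2).1
    have h3 := (card_Win_nbr (w := w) hqi hi1 hi2).1
    have h4 := (card_Win_nbr (w := w) hqj hj1 hj2).1
    have c1 : (Sa:ℝ) - 1 ≤ ((Win w k q'.1).card : ℝ) := by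
      have : (Sa:ℝ) ≤ ((Win w k q'.1).card : ℝ) + 1 := by exact_mod_cast h1
      linarith
    have c2 : (Sb:ℝ) - 1 ≤ ((Win w k q'.2.1).card : ℝ) := by
      have : (Sb:ℝ) ≤ ((Win w k q'.2.1).card : ℝ) + 1 := by exact_mod_cast h2
      linarith
    have c3 : (Si:ℝ) - 1 ≤ ((Win w l q'.2.2.1).card : ℝ) := by
      have : (Si:ℝ) ≤ ((Win w l q'.2.2.1).card : ℝ) + 1 := by exact_mod_cast h3
      linarith
    have c4 : (Sj:ℝ) - 1 ≤ ((Win w l q'.2.2.2).card : ℝ) := by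
      have : (Sj:ℝ) ≤ ((Win w l q'.2.2.2).card : ℝ) + 1 := by exact_mod_cast h4
      linarith
    rw [hQ]
    gcongr <;> linarith
  -- bound nuMinus
  have hminus : 1 / R ≤ nuMinus w k l (a, b, i, j) := by
    rw [nuMinus, dif_pos hN]
    apply Finset.le_inf'
    intro q' hq'
    rw [mem_Win4] at hq'
    obtain ⟨hqa, hqb, hqi, hqj⟩ := hq'
    rw [nu4, card_Win4]
    have pa : 1 ≤ (Win w k q'.1).card := le_trans (by omega) (card_Win_lb (mem_Win.1 hqa).1 (mem_Win.1 hqa).2.1 hwk)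
    have pb : 1 ≤ (Win w k q'.2.1).card := le_trans (by omega) (card_Win_lb (mem_Win.1 hqb).1 (mem_Win.1 hqb).2.1 hwk)
    have pi' : 1 ≤ (Win w l q'.2.2.1).card := le_trans (by omega) (card_Win_lb (mem_Win.1 hqi).1 (mem_Win.1 hqi).2.1 hwl)
    have pj : 1 ≤ (Win w l q'.2.2.2).card := le_trans (by omega) (card_Win_lb (mem_Win.1 hqj).1 (mem_Win.1 hqj).2.1 hwl)
    apply one_div_le_one_div_of_le
    · have hm : 1 ≤ (Win w k q'.1).card * ((Win w k q'.2.1).card * ((Win w l q'.2.2.1).card * (Win w l q'.2.2.2).card)) := by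
        calc 1 = 1*(1*(1*1)) := by norm_num
        _ ≤ _ := Nat.mul_le_mul pa (Nat.mul_le_mul pb (Nat.mul_le_mul pi' pj))
      exact_mod_cast Nat.lt_of_lt_of_le Nat.zero_lt_one hm
    · push_cast
      have h1 := (card_Win_nbr (w := w) hqa ha1 ha2).2
      have h2 := (card_Win_nbr (w := w) hqb hb1 hb2).2
      have h3 := (card_Win_nbr (w := w) hqi hi1 hi2).2
      have h4 := (card_Win_nbr (w := w) hqj hj1 hj2).2
      have c1 : ((Win w k q'.1).card : ℝ) ≤ (Sa:ℝ) + 1 := by exact_mod_cast h1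
      have c2 : ((Win w k q'.2.1).card : ℝ) ≤ (Sb:ℝ) + 1 := by exact_mod_cast h2
      have c3 : ((Win w l q'.2.2.1).card : ℝ) ≤ (Si:ℝ) + 1 := by exact_mod_cast h3
      have c4 : ((Win w l q'.2.2.2).card : ℝ) ≤ (Sj:ℝ) + 1 := by exact_mod_cast h4
      rw [hR]
      have n1 : (0:ℝ) ≤ ((Win w k q'.1).card : ℝ) := Nat.cast_nonneg _
      have n3 : (0:ℝ) ≤ ((Win w l q'.2.2.1).card : ℝ) := Nat.cast_nonneg _
      have n2 : (0:ℝ) ≤ ((Win w k q'.2.1).card : ℝ) := Nat.cast_nonneg _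
      have n4 : (0:ℝ) ≤ ((Win w l q'.2.2.2).card : ℝ) := Nat.cast_nonneg _
      exact mul_le_mul c1 (mul_le_mul c2 (mul_le_mul c3 c4 n4 (by linarith)) (mul_nonneg n3 n4) (by linarith)) (mul_nonneg n2 (mul_nonneg n3 n4)) (by linarith)
  -- assemble
  rw [card_Win4, card_Win4]
  push_cast
  set Spa := (Win (w+1) k a).card with hSpa
  set Spb := (Win (w+1) k b).card with hSpb
  set Spi := (Win (w+1) l i).card with hSpi
  set Spj := (Win (w+1) l j).card with hSpj
  set Sma := (Win (w-1) k a).card with hSma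
  set Smb := (Win (w-1) k b).card with hSmb
  set Smi := (Win (w-1) l i).card with hSmi
  set Smj := (Win (w-1) l j).card with hSmj
  have mpa : Sa ≤ Spa := card_Win_mono (by omega)
  have mpb : Sb ≤ Spb := card_Win_mono (by omega)
  have mpi : Si ≤ Spi := card_Win_mono (by omega)
  have mpj : Sj ≤ Spj := card_Win_mono (by omega)
  have mpa' : Spa ≤ Sa + 2 := card_Win_succ_le
  have mpb' : Spb ≤ Sb + 2 := card_Win_succ_le
  have mpi' : Spi ≤ Si + 2 := card_Win_succ_le
  have mpj' : Spj ≤ Sj + 2 := card_Win_succ_le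
  have mma : Sma ≤ Sa := card_Win_mono (by omega)
  have mmb : Smb ≤ Sb := card_Win_mono (by omega)
  have mmi : Smi ≤ Si := card_Win_mono (by omega)
  have mmj : Smj ≤ Sj := card_Win_mono (by omega)
  have mma' : Sa ≤ Sma + 2 := card_Win_pred_ge
  have mmb' : Sb ≤ Smb + 2 := card_Win_pred_ge
  have mmi' : Si ≤ Smi + 2 := card_Win_pred_ge
  have mmj' : Sj ≤ Smj + 2 := card_Win_pred_ge
  clear_value Q R Sa Sb Si Sj Spa Spb Spi Spj Sma Smb Smi Smj
  obtain ⟨⟨ua1, ua2⟩, la1, la2, la3⟩ := dim_bounds w Sa Spa Sma hw hSa1 mpa mpa' mma mma'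
  obtain ⟨⟨ub1, ub2⟩, lb1, lb2, lb3⟩ := dim_bounds w Sb Spb Smb hw hSb1 mpb mpb' mmb mmb'
  obtain ⟨⟨ui1, ui2⟩, li1, li2, li3⟩ := dim_bounds w Si Spi Smi hw hSi1 mpi mpi' mmi mmi'
  obtain ⟨⟨uj1, uj2⟩, lj1, lj2, lj3⟩ := dim_bounds w Sj Spj Smj hw hSj1 mpj mpj' mmj mmj'
  have hw1 : (1:ℝ) ≤ (w:ℝ) := by exact_mod_cast hw
  have main := prod4_bound (w:ℝ) _ _ _ _ _ _ _ _ hw1 ua1 ua2 ub1 ub2 ui1 ui2 uj1 uj2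
    la1 la2 la3 lb1 lb2 lb3 li1 li2 li3 lj1 lj2 lj3
  have npa : (0:ℝ) ≤ (Spa:ℝ) := Nat.cast_nonneg _
  have npb : (0:ℝ) ≤ (Spb:ℝ) := Nat.cast_nonneg _
  have npi : (0:ℝ) ≤ (Spi:ℝ) := Nat.cast_nonneg _
  have npj : (0:ℝ) ≤ (Spj:ℝ) := Nat.cast_nonneg _
  have nma : (0:ℝ) ≤ (Sma:ℝ) := Nat.cast_nonneg _
  have nmb : (0:ℝ) ≤ (Smb:ℝ) := Nat.cast_nonneg _
  have nmi : (0:ℝ) ≤ (Smi:ℝ) := Nat.cast_nonneg _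
  have nmj : (0:ℝ) ≤ (Smj:ℝ) := Nat.cast_nonneg _
  have hSplus : nuPlus w k l (a, b, i, j) * ((Spa:ℝ) * ((Spb:ℝ) * ((Spi:ℝ) * (Spj:ℝ))))
      ≤ 1/Q * ((Spa:ℝ) * ((Spb:ℝ) * ((Spi:ℝ) * (Spj:ℝ)))) :=
    mul_le_mul_of_nonneg_right hplus
      (mul_nonneg npa (mul_nonneg npb (mul_nonneg npi npj)))
  have hSminus : 1/R * ((Sma:ℝ) * ((Smb:ℝ) * ((Smi:ℝ) * (Smj:ℝ))))
      ≤ nuMinus w k l (a, b, i, j) * ((Sma:ℝ) * ((Smb:ℝ) * ((Smi:ℝ) * (Smj:ℝ)))) :=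
    mul_le_mul_of_nonneg_right hminus
      (mul_nonneg nma (mul_nonneg nmb (mul_nonneg nmi nmj)))
  have e1 : 1/Q * ((Spa:ℝ) * ((Spb:ℝ) * ((Spi:ℝ) * (Spj:ℝ))))
      = (Spa:ℝ)/((Sa:ℝ)-1) * ((Spb:ℝ)/((Sb:ℝ)-1)) * ((Spi:ℝ)/((Si:ℝ)-1)) * ((Spj:ℝ)/((Sj:ℝ)-1)) := by
    rw [hQ]; field_simp
  have e2 : 1/R * ((Sma:ℝ) * ((Smb:ℝ) * ((Smi:ℝ) * (Smj:ℝ))))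
      = (Sma:ℝ)/((Sa:ℝ)+1) * ((Smb:ℝ)/((Sb:ℝ)+1)) * ((Smi:ℝ)/((Si:ℝ)+1)) * ((Smj:ℝ)/((Sj:ℝ)+1)) := by
    have d1 : ((Sa:ℝ)+1) ≠ 0 := by linarith
    have d2 : ((Sb:ℝ)+1) ≠ 0 := by linarith
    have d3 : ((Si:ℝ)+1) ≠ 0 := by linarith
    have d4 : ((Sj:ℝ)+1) ≠ 0 := by linarith
    rw [hR]; field_simp
  linarith [main, hSplus, hSminus, e1, e2]
lemma Win4_subset_Icc4 (v k l a b i j : ℕ) : Win4 v k l a b i j ⊆ Icc4 k l := by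
  intro q hq
  rw [mem_Win4] at hq
  rw [mem_Icc4]
  obtain ⟨h1, h2, h3, h4⟩ := hq
  rw [mem_Win] at h1 h2 h3 h4
  omega

lemma Win_mono {v v' l i : ℕ} (h : v ≤ v') : Win v l i ⊆ Win v' l i := by
  intro x hx
  rw [mem_Win] at hx ⊢
  omega

lemma Win4_mono {v v' : ℕ} (h : v ≤ v') (k l a b i j : ℕ) :
    Win4 v k l a b i j ⊆ Win4 v' k l a b i j :=
  Finset.product_subset_product (Win_mono h)
    (Finset.product_subset_product (Win_mono h)
      (Finset.product_subset_product (Win_mono h) (Win_mono h)))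

lemma nu4_nonneg (w k l : ℕ) (q : ℕ × ℕ × ℕ × ℕ) : 0 ≤ nu4 w k l q := by
  rw [nu4]; positivity

lemma nuMinus_le_nuPlus (w k l : ℕ) (q : ℕ × ℕ × ℕ × ℕ) :
    nuMinus w k l q ≤ nuPlus w k l q := by
  rw [nuMinus, nuPlus]
  by_cases h : (Win4 1 k l q.1 q.2.1 q.2.2.1 q.2.2.2).Nonempty
  · rw [dif_pos h, dif_pos h]
    obtain ⟨x, hx⟩ := h
    exact le_trans (Finset.inf'_le _ hx) (Finset.le_sup' _ hx)
  · rw [dif_neg h, dif_neg h]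

lemma nuPlus_nonneg (w k l : ℕ) (q : ℕ × ℕ × ℕ × ℕ) : 0 ≤ nuPlus w k l q := by
  rw [nuPlus]
  by_cases h : (Win4 1 k l q.1 q.2.1 q.2.2.1 q.2.2.2).Nonempty
  · rw [dif_pos h]
    obtain ⟨x, hx⟩ := h
    exact le_trans (nu4_nonneg w k l x) (Finset.le_sup' _ hx)
  · rw [dif_neg h]

lemma AMinus_le_APlus (w k l : ℕ) (A : ℕ × ℕ × ℕ × ℕ → ℝ)
    (hA : ∀ q ∈ Icc4 k l, 0 ≤ A q) (q : ℕ × ℕ × ℕ × ℕ) :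
    AMinus w k l A q ≤ APlus w k l A q := by
  rw [AMinus, APlus]
  calc ∑ q' ∈ Win4 (w - 1) k l q.1 q.2.1 q.2.2.1 q.2.2.2, nuMinus w k l q' * A q'
      ≤ ∑ q' ∈ Win4 (w - 1) k l q.1 q.2.1 q.2.2.1 q.2.2.2, nuPlus w k l q' * A q' := by
        apply Finset.sum_le_sum
        intro q' hq'
        exact mul_le_mul_of_nonneg_right (nuMinus_le_nuPlus w k l q')
          (hA q' (Win4_subset_Icc4 _ _ _ _ _ _ _ hq'))
    _ ≤ ∑ q' ∈ Win4 (w + 1) k l q.1 q.2.1 q.2.2.1 q.2.2.2, nuPlus w k l q' * A q' := by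
        apply Finset.sum_le_sum_of_subset_of_nonneg (Win4_mono (by omega) k l _ _ _ _)
        intro q' hq' _
        exact mul_nonneg (nuPlus_nonneg w k l q')
          (hA q' (Win4_subset_Icc4 _ _ _ _ _ _ _ hq'))

lemma Win4_symm {v k l : ℕ} {q q' : ℕ × ℕ × ℕ × ℕ} (hq : q ∈ Icc4 k l) (hq' : q' ∈ Icc4 k l) :
    q' ∈ Win4 v k l q.1 q.2.1 q.2.2.1 q.2.2.2 ↔ q ∈ Win4 v k l q'.1 q'.2.1 q'.2.2.1 q'.2.2.2 := by
  rw [mem_Icc4] at hq hq'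
  rw [mem_Win4, mem_Win4]
  simp only [mem_Win]
  omega

lemma swap_sum (v k l : ℕ) (f : ℕ × ℕ × ℕ × ℕ → ℝ) :
    ∑ q ∈ Icc4 k l, ∑ q' ∈ Win4 v k l q.1 q.2.1 q.2.2.1 q.2.2.2, f q'
      = ∑ q' ∈ Icc4 k l, ((Win4 v k l q'.1 q'.2.1 q'.2.2.1 q'.2.2.2).card : ℝ) * f q' := by
  have step1 : ∀ q ∈ Icc4 k l,
      ∑ q' ∈ Win4 v k l q.1 q.2.1 q.2.2.1 q.2.2.2, f q'
        = ∑ q' ∈ Icc4 k l, if q' ∈ Win4 v k l q.1 q.2.1 q.2.2.1 q.2.2.2 then f q' else 0 := by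
    intro q _
    rw [Finset.sum_ite_mem, Finset.inter_eq_right.2 (Win4_subset_Icc4 _ _ _ _ _ _ _)]
  rw [Finset.sum_congr rfl step1, Finset.sum_comm]
  apply Finset.sum_congr rfl
  intro q' hq'
  have step2 : ∀ q ∈ Icc4 k l,
      (if q' ∈ Win4 v k l q.1 q.2.1 q.2.2.1 q.2.2.2 then f q' else 0)
        = if q ∈ Win4 v k l q'.1 q'.2.1 q'.2.2.1 q'.2.2.2 then f q' else 0 := by
    intro q hq
    simp only [Win4_symm hq hq']
  rw [Finset.sum_congr rfl step2, Finset.sum_ite_mem,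
    Finset.inter_eq_right.2 (Win4_subset_Icc4 _ _ _ _ _ _ _), Finset.sum_const,
    nsmul_eq_mul]
theorem stmt2 :
    ∃ C : ℝ, 0 < C ∧
      ∀ (w k l : ℕ), 1 ≤ w → w < k → w < l →
        ∀ A : ℕ × ℕ × ℕ × ℕ → ℝ,
          (∀ q ∈ Icc4 k l, 0 ≤ A q) → (∑ q ∈ Icc4 k l, A q) = 1 →
          l1Arr k l (APlus w k l A) (AMinus w k l A) ≤ C / w := by
  refine ⟨1000, by norm_num, ?_⟩
  intro w k l hw hwk hwl A hA hsum
  have habs : ∀ q ∈ Icc4 k l,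
      |APlus w k l A q - AMinus w k l A q| = APlus w k l A q - AMinus w k l A q := by
    intro q _
    exact abs_of_nonneg (sub_nonneg.2 (AMinus_le_APlus w k l A hA q))
  rw [l1Arr, Finset.sum_congr rfl habs, Finset.sum_sub_distrib]
  have hplus : ∑ q ∈ Icc4 k l, APlus w k l A q
      = ∑ q' ∈ Icc4 k l,
          ((Win4 (w+1) k l q'.1 q'.2.1 q'.2.2.1 q'.2.2.2).card : ℝ) * (nuPlus w k l q' * A q') :=
    swap_sum (w+1) k l (fun q' => nuPlus w k l q' * A q')
  have hminus : ∑ q ∈ Icc4 k l, AMinus w k l A q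
      = ∑ q' ∈ Icc4 k l,
          ((Win4 (w-1) k l q'.1 q'.2.1 q'.2.2.1 q'.2.2.2).card : ℝ) * (nuMinus w k l q' * A q') :=
    swap_sum (w-1) k l (fun q' => nuMinus w k l q' * A q')
  rw [hplus, hminus, ← Finset.sum_sub_distrib]
  have hbound : ∑ q' ∈ Icc4 k l,
      (((Win4 (w+1) k l q'.1 q'.2.1 q'.2.2.1 q'.2.2.2).card : ℝ) * (nuPlus w k l q' * A q')
        - ((Win4 (w-1) k l q'.1 q'.2.1 q'.2.2.1 q'.2.2.2).card : ℝ) * (nuMinus w k l q' * A q'))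
      ≤ ∑ q' ∈ Icc4 k l, 1000 / (w : ℝ) * A q' := by
    apply Finset.sum_le_sum
    intro q' hq'
    have hk := key_bound w k l hw hwk hwl q' hq'
    have hAq := hA q' hq'
    have := mul_le_mul_of_nonneg_right hk hAq
    calc ((Win4 (w+1) k l q'.1 q'.2.1 q'.2.2.1 q'.2.2.2).card : ℝ) * (nuPlus w k l q' * A q')
          - ((Win4 (w-1) k l q'.1 q'.2.1 q'.2.2.1 q'.2.2.2).card : ℝ) * (nuMinus w k l q' * A q')
        = (nuPlus w k l q' * ((Win4 (w+1) k l q'.1 q'.2.1 q'.2.2.1 q'.2.2.2).card : ℝ)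
            - nuMinus w k l q' * ((Win4 (w-1) k l q'.1 q'.2.1 q'.2.2.1 q'.2.2.2).card : ℝ)) * A q' := by
          ring
      _ ≤ 1000 / (w : ℝ) * A q' := this
  calc _ ≤ ∑ q' ∈ Icc4 k l, 1000 / (w : ℝ) * A q' := hbound
    _ = 1000 / (w : ℝ) := by rw [← Finset.mul_sum, hsum, mul_one]
end

section
/- Let w < ℓ be natural numbers, let t be a bias threshold vector of length ℓ, and let G be a weighted directed graph on vertex set {1,…,n} with m_G > 0 and no isolated vertices. Write bind(v) = ind^t(bias_G(v)). Define the weighted directed graph K on the vertex set 𝒱 = {(v,i') : v ∈ {1,…,n}, i' ∈ Win^{w,ℓ}(bind(v))} by Adj_K((u,i'),(v,j')) = Adj_G(u,v)/|Win^{w,ℓ}(bind(u),bind(v))| for all (u,i'),(v,j') ∈ 𝒱. Then: (1) for every vertex v and every i' ∈ Win^{w,ℓ}(bind(v)), deg-out_K(v,i') = deg-out_G(v)/|Win^{w,ℓ}(bind(v))|, deg-in_K(v,i') = deg-in_G(v)/|Win^{w,ℓ}(bind(v))|, deg_K(v,i') = deg_G(v)/|Win^{w,ℓ}(bind(v))|,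 and bias_K(v,i') = bias_G(v); (2) m_K = m_G; and (3) val_K = val_G. -/
open Finset

/-- A weighted directed graph on a finite vertex set `V`: a nonnegative adjacency matrix
with zero diagonal. -/
structure WGraphOn (V : Type) [Fintype V] where
  Adj : V → V → ℝ
  nonneg : ∀ u v, 0 ≤ Adj u v
  diag : ∀ v, Adj v v = 0

variable {V : Type} [Fintype V]

/-- The total weight `m_G`. -/
noncomputable def mTot (G : WGraphOn V) : ℝ := ∑ u, ∑ v, G.Adj u v

/-- The out-degree `deg-out_G(v)`. -/
noncomputable def degOut (G : WGraphOn V) (v : V) : ℝ := ∑ u, G.Adj v u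

/-- The in-degree `deg-in_G(v)`. -/
noncomputable def degIn (G : WGraphOn V) (v : V) : ℝ := ∑ u, G.Adj u v

/-- The total degree `deg_G(v)`. -/
noncomputable def deg (G : WGraphOn V) (v : V) : ℝ := degOut G v + degIn G v

/-- The bias `bias_G(v) = (deg-out_G(v) − deg-in_G(v))/deg_G(v)` (junk value `0` at
isolated vertices, where all incident weights vanish anyway). -/
noncomputable def bias (G : WGraphOn V) (v : V) : ℝ := (degOut G v - degIn G v) / deg G v

/-- The (normalized) value `val_G(x)` of a cut `x`. -/
noncomputable def cutVal (G : WGraphOn V) (x : V → Bool) : ℝ :=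
  (1 / mTot G) * ∑ u, ∑ v, G.Adj u v * (if x u then 1 else 0) * (if x v then 0 else 1)

/-- The Max-DICUT value `val_G`, the maximum of `val_G(x)` over all cuts. -/
noncomputable def gval [DecidableEq V] (G : WGraphOn V) : ℝ :=
  Finset.univ.sup' Finset.univ_nonempty (cutVal G)

/-- The index `ind^t(x)` of `x` with respect to the threshold vector `(t 0, …, t ℓ)`:
the unique `i ∈ {1,…,ℓ}` with `t (i−1) ≤ x < t i`, and `ℓ` when `x = t ℓ`. -/
noncomputable def tInd (t : ℕ → ℝ) (l : ℕ) (x : ℝ) : ℕ :=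
  if x = t l then l
  else ∑ i ∈ (Finset.Icc 1 l).filter (fun i => t (i - 1) ≤ x ∧ x < t i), i

/-- The snapshot `Snap_{G,t}`. -/
noncomputable def Snap (G : WGraphOn V) (t : ℕ → ℝ) (l : ℕ) (i j : ℕ) : ℝ :=
  (1 / mTot G) * ∑ u, ∑ v,
    (if tInd t l (bias G u) = i ∧ tInd t l (bias G v) = j then G.Adj u v else 0)

/-- The bias class `bind(v) = ind^t(bias_G(v))` of a vertex. -/
noncomputable def bind' (G : WGraphOn V) (t : ℕ → ℝ) (l : ℕ) (v : V) : ℕ :=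
  tInd t l (bias G v)

/-- The vertex set `𝒱 = {(v,i') : v ∈ V, i' ∈ Win^{w,ℓ}(bind(v))}` of the blowup graph. -/
def BVert (G : WGraphOn V) (t : ℕ → ℝ) (w l : ℕ) : Type :=
  {q : V × ℕ // q.2 ∈ Win w l (bind' G t l q.1)}

noncomputable instance (G : WGraphOn V) (t : ℕ → ℝ) (w l : ℕ) :
    Fintype (BVert G t w l) := by
  classical
  refine Fintype.ofFinset
    (((Finset.univ : Finset V) ×ˢ Finset.Icc 1 l).filter
      (fun q => q.2 ∈ Win w l (bind' G t l q.1))) ?_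
  intro q
  simp only [Finset.mem_filter, Finset.mem_product, Finset.mem_univ, true_and]
  constructor
  · exact fun h => h.2
  · intro h
    have hq : q.2 ∈ Win w l (bind' G t l q.1) := h
    exact ⟨(Finset.mem_filter.mp hq).1, hq⟩

noncomputable instance (G : WGraphOn V) (t : ℕ → ℝ) (w l : ℕ) :
    DecidableEq (BVert G t w l) := Classical.decEq _

/-- The blowup graph `K` of `G`, dividing the weight of each edge `(u,v)` evenly among all
copies of `u` and `v`. -/
noncomputable def blowup (G : WGraphOn V) (t : ℕ → ℝ) (w l : ℕ) :
    WGraphOn (BVert G t w l) where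
  Adj q r := G.Adj q.1.1 r.1.1 /
    (((Win w l (bind' G t l q.1.1)) ×ˢ (Win w l (bind' G t l r.1.1))).card : ℝ)
  nonneg q r := div_nonneg (G.nonneg _ _) (Nat.cast_nonneg _)
  diag q := by simp [G.diag]


/-!
The copies `(v, i')` of a vertex `v` split every edge at `v` evenly, so all degrees of `v` are
divided by the same factor `|Win(bind v)|` (which is positive, since `bind v ∈ {1, …, ℓ}` lies in
its own window); hence the bias and the total weight are unchanged.

A cut of `G` lifted to all copies keeps its value, so `val_G ≤ val_K`. Conversely, a cut of `K`
has the value of the fractional cut `p` of `G`, where `p v` is the fraction of copies of `v` on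
the source side, i.e. `∑ Adj(u,v) p(u) (1 - p(v)) / m_G`. Because `Adj` has zero diagonal this
expression is affine in each coordinate of `p`, so rounding the coordinates one at a time to the
better of `0` and `1` gives a cut of `G` that is at least as good, and `val_K ≤ val_G`.
-/

lemma tInd_mem_Icc {t : ℕ → ℝ} {l : ℕ} (hl : 0 < l) (ht : ∀ i, i < l → t i < t (i + 1))
    {x : ℝ} (h0 : t 0 ≤ x) (h1 : x ≤ t l) : tInd t l x ∈ Icc 1 l := by
  unfold tInd
  split_ifs with hxl
  · exact mem_Icc.mpr ⟨hl, le_rfl⟩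
  have hex : ∃ i, x < t i := ⟨l, lt_of_le_of_ne h1 hxl⟩
  have hil : Nat.find hex ≤ l := Nat.find_min' hex (lt_of_le_of_ne h1 hxl)
  have hi0 : Nat.find hex ≠ 0 := fun h => by
    have := Nat.find_spec hex
    rw [h] at this
    linarith
  have hprev : t (Nat.find hex - 1) ≤ x := not_lt.mp (Nat.find_min hex (by omega))
  have hmono : MonotoneOn t (Set.Iic l) := (strictMonoOn_Iic_of_lt_succ ht).monotoneOn
  have hsingle : (Icc 1 l).filter (fun i => t (i - 1) ≤ x ∧ x < t i) = {Nat.find hex} := by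
    refine eq_singleton_iff_unique_mem.mpr
      ⟨mem_filter.mpr ⟨mem_Icc.mpr ⟨by omega, hil⟩, hprev, Nat.find_spec hex⟩, fun j hj => ?_⟩
    obtain ⟨hjIcc, hjle, hjlt⟩ := mem_filter.mp hj
    have hjbounds := mem_Icc.mp hjIcc
    refine le_antisymm (not_lt.mp fun hlt => ?_) (Nat.find_min' hex hjlt)
    have := hmono (Set.mem_Iic.mpr hil) (Set.mem_Iic.mpr (by omega))
      (by omega : Nat.find hex ≤ j - 1)
    linarith [Nat.find_spec hex]
  rw [hsingle, sum_singleton]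
  exact mem_Icc.mpr ⟨by omega, hil⟩

lemma bias_mem_Icc (G : WGraphOn V) (v : V) : bias G v ∈ Set.Icc (-1) 1 := by
  have hout : 0 ≤ degOut G v := sum_nonneg fun u _ => G.nonneg v u
  have hin : 0 ≤ degIn G v := sum_nonneg fun u _ => G.nonneg u v
  have h : |bias G v| ≤ 1 := by
    rw [bias, deg, abs_div, abs_of_nonneg (add_nonneg hout hin)]
    exact div_le_one_of_le₀ (abs_sub_le_iff.mpr ⟨by linarith, by linarith⟩)
      (add_nonneg hout hin)
  exact abs_le.mp h

lemma mem_Win_self {w l i : ℕ} (hi : i ∈ Icc 1 l) : i ∈ Win w l i :=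
  mem_filter.mpr ⟨hi, by omega, by omega⟩

lemma Win_bind'_nonempty {t : ℕ → ℝ} {l : ℕ} (ht : ∀ i, i < l → t i < t (i + 1))
    (ht0 : t 0 = -1) (htl : t l = 1) (G : WGraphOn V) (w : ℕ) (v : V) :
    (Win w l (bind' G t l v)).Nonempty := by
  have hl : 0 < l := Nat.pos_of_ne_zero fun h => by subst h; linarith
  obtain ⟨h0, h1⟩ := bias_mem_Icc G v
  exact ⟨_, mem_Win_self (tInd_mem_Icc hl ht (by rwa [ht0]) (by rwa [htl]))⟩

lemma sum_subtype_prod_mem {ι M : Type*} [AddCommMonoid M] (S : V → Finset ι)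
    [hS : Fintype {q : V × ι // q.2 ∈ S q.1}] (f : {q : V × ι // q.2 ∈ S q.1} → M) :
    ∑ q, f q = ∑ u, ∑ i : S u, f ⟨(u, i), i.2⟩ :=
  (Fintype.sum_equiv (Equiv.subtypeProdEquivSigmaSubtype fun u i => i ∈ S u) _
    (fun x => f ⟨(x.1, x.2), x.2.2⟩) fun _ => rfl).trans (Fintype.sum_sigma _)

lemma mTot_nonneg (G : WGraphOn V) : 0 ≤ mTot G :=
  sum_nonneg fun u _ => sum_nonneg fun v _ => G.nonneg u v

noncomputable def fracCut (G : WGraphOn V) (p : V → ℝ) : ℝ :=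
  ∑ u, ∑ v, G.Adj u v * p u * (1 - p v)

lemma cutVal_eq_fracCut (G : WGraphOn V) (x : V → Bool) :
    cutVal G x = 1 / mTot G * fracCut G (fun v => if x v then 1 else 0) := by
  unfold cutVal fracCut
  congr 1
  refine sum_congr rfl fun u _ => sum_congr rfl fun v _ => ?_
  cases hu : x u <;> cases hv : x v <;> simp [hu, hv]

lemma fracCut_update [DecidableEq V] (G : WGraphOn V) (p : V → ℝ) (a : V) (c : ℝ) :
    fracCut G (Function.update p a c)
      = (1 - c) * fracCut G (Function.update p a 0)
        + c * fracCut G (Function.update p a 1) := by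
  simp only [fracCut, mul_sum, ← sum_add_distrib]
  refine sum_congr rfl fun u _ => sum_congr rfl fun v _ => ?_
  by_cases hu : u = a <;> by_cases hv : v = a <;> subst_vars <;>
    simp [Function.update_of_ne, *, G.diag] <;> ring

lemma exists_cut_ge_fracCut [DecidableEq V] (G : WGraphOn V) (s : Finset V) (p : V → ℝ)
    (hp : ∀ v, p v ∈ Set.Icc 0 1) (hs : ∀ v ∉ s, p v = 0 ∨ p v = 1) :
    ∃ x : V → Bool, fracCut G p ≤ fracCut G (fun v => if x v then 1 else 0) := by
  induction s using Finset.induction generalizing p with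
  | empty =>
    refine ⟨fun v => decide (p v = 1), le_of_eq ?_⟩
    congr 1
    funext v
    rcases hs v (notMem_empty v) with h | h <;> simp [h]
  | insert a s _ ih =>
    obtain ⟨c, hc, hle⟩ :
        ∃ c : ℝ, (c = 0 ∨ c = 1) ∧ fracCut G p ≤ fracCut G (Function.update p a c) := by
      have h := fracCut_update G p a (p a)
      rw [Function.update_eq_self] at h
      obtain ⟨h0, h1⟩ := hp a
      rcases le_total (fracCut G (Function.update p a 0)) (fracCut G (Function.update p a 1))
        with h01 | h10
      · exact ⟨1, Or.inr rfl, by nlinarith⟩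
      · exact ⟨0, Or.inl rfl, by nlinarith⟩
    have hpc : ∀ v, Function.update p a c v ∈ Set.Icc 0 1 := by
      intro v
      by_cases hv : v = a
      · subst hv; rcases hc with rfl | rfl <;> simp
      · rw [Function.update_of_ne hv]; exact hp v
    have hsc : ∀ v ∉ s, Function.update p a c v = 0 ∨ Function.update p a c v = 1 := by
      intro v hv
      by_cases hva : v = a
      · subst hva; simpa using hc
      · rw [Function.update_of_ne hva]; exact hs v (by simp [hva, hv])
    obtain ⟨x, hx⟩ := ih _ hpc hsc
    exact ⟨x, hle.trans hx⟩

section Blowup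

variable (G : WGraphOn V) (t : ℕ → ℝ) (w l : ℕ)

def BVert.copy (u : V) (i : Win w l (bind' G t l u)) : BVert G t w l := ⟨(u, i), i.2⟩

@[simp]
lemma BVert.copy_fst (u : V) (i : Win w l (bind' G t l u)) : (BVert.copy G t w l u i).1.1 = u :=
  rfl

lemma sum_bvert {M : Type*} [AddCommMonoid M] (f : BVert G t w l → M) :
    ∑ q, f q = ∑ u, ∑ i : Win w l (bind' G t l u), f (BVert.copy G t w l u i) :=
  sum_subtype_prod_mem (fun v => Win w l (bind' G t l v))
    (hS := (inferInstance : Fintype (BVert G t w l))) f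

lemma blowup_adj (q r : BVert G t w l) :
    (blowup G t w l).Adj q r = G.Adj q.1.1 r.1.1 /
      ((#(Win w l (bind' G t l q.1.1)) : ℝ) * #(Win w l (bind' G t l r.1.1))) := by
  simp only [blowup, card_product, Nat.cast_mul]

noncomputable def fiberMean (a : BVert G t w l → ℝ) (u : V) : ℝ :=
  (∑ i : Win w l (bind' G t l u), a (BVert.copy G t w l u i)) /
    (#(Win w l (bind' G t l u)) : ℝ)

lemma sum_blowup_adj_mul (a b : BVert G t w l → ℝ) :
    ∑ q, ∑ r, (blowup G t w l).Adj q r * a q * b r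
      = ∑ u, ∑ v, G.Adj u v * fiberMean G t w l a u * fiberMean G t w l b v := by
  simp only [sum_bvert G t w l, blowup_adj, BVert.copy_fst]
  refine sum_congr rfl fun u _ => ?_
  rw [sum_comm]
  refine sum_congr rfl fun v _ => ?_
  simp only [fiberMean, sum_div, mul_sum, sum_mul]
  refine (sum_congr rfl fun i _ => sum_congr rfl fun j _ => ?_).trans sum_comm
  ring

variable {G t w l}

lemma fiberMean_comp_fst (hwin : ∀ v, (Win w l (bind' G t l v)).Nonempty) (f : V → ℝ) :
    fiberMean G t w l (fun q => f q.1.1) = f := by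
  funext u
  simp only [fiberMean, BVert.copy_fst]
  rw [sum_const, card_univ, Fintype.card_coe, nsmul_eq_mul,
    mul_div_cancel_left₀ _ (Nat.cast_ne_zero.mpr (hwin u).card_ne_zero)]

lemma fiberMean_one_sub (hwin : ∀ v, (Win w l (bind' G t l v)).Nonempty)
    (a : BVert G t w l → ℝ) :
    fiberMean G t w l (fun q => 1 - a q) = fun u => 1 - fiberMean G t w l a u := by
  funext u
  simp [fiberMean, sub_div, (hwin u).card_ne_zero]

lemma fiberMean_mem_Icc (a : BVert G t w l → ℝ) (ha : ∀ q, a q ∈ Set.Icc 0 1) (u : V) :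
    fiberMean G t w l a u ∈ Set.Icc 0 1 := by
  refine ⟨div_nonneg (sum_nonneg fun i _ => (ha _).1) (Nat.cast_nonneg _),
    div_le_one_of_le₀ ?_ (Nat.cast_nonneg _)⟩
  simpa using sum_le_card_nsmul (univ : Finset (Win w l (bind' G t l u))) _ (1 : ℝ)
    fun i _ => (ha (BVert.copy G t w l u i)).2

lemma degOut_blowup (hwin : ∀ v, (Win w l (bind' G t l v)).Nonempty) (q : BVert G t w l) :
    degOut (blowup G t w l) q = degOut G q.1.1 / #(Win w l (bind' G t l q.1.1)) := by
  rw [degOut, sum_bvert, degOut, sum_div]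
  refine sum_congr rfl fun v _ => ?_
  simp only [blowup_adj, BVert.copy_fst, sum_const, card_univ, Fintype.card_coe, nsmul_eq_mul]
  field_simp [(hwin v).card_ne_zero]

lemma degIn_blowup (hwin : ∀ v, (Win w l (bind' G t l v)).Nonempty) (q : BVert G t w l) :
    degIn (blowup G t w l) q = degIn G q.1.1 / #(Win w l (bind' G t l q.1.1)) := by
  rw [degIn, sum_bvert, degIn, sum_div]
  refine sum_congr rfl fun v _ => ?_
  simp only [blowup_adj, BVert.copy_fst, sum_const, card_univ, Fintype.card_coe, nsmul_eq_mul]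
  field_simp [(hwin v).card_ne_zero]

lemma deg_blowup (hwin : ∀ v, (Win w l (bind' G t l v)).Nonempty) (q : BVert G t w l) :
    deg (blowup G t w l) q = deg G q.1.1 / #(Win w l (bind' G t l q.1.1)) := by
  rw [deg, degOut_blowup hwin, degIn_blowup hwin, ← add_div, deg]

lemma bias_blowup (hwin : ∀ v, (Win w l (bind' G t l v)).Nonempty) (q : BVert G t w l) :
    bias (blowup G t w l) q = bias G q.1.1 := by
  rw [bias, degOut_blowup hwin, degIn_blowup hwin, deg_blowup hwin, ← sub_div,
    div_div_div_cancel_right₀ (Nat.cast_ne_zero.mpr (hwin q.1.1).card_ne_zero), bias]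

lemma mTot_blowup (hwin : ∀ v, (Win w l (bind' G t l v)).Nonempty) :
    mTot (blowup G t w l) = mTot G := by
  have h := sum_blowup_adj_mul G t w l (fun _ => 1) (fun _ => 1)
  rw [fiberMean_comp_fst hwin (fun _ => 1)] at h
  simpa [mTot] using h

lemma cutVal_blowup (hwin : ∀ v, (Win w l (bind' G t l v)).Nonempty)
    (y : BVert G t w l → Bool) :
    cutVal (blowup G t w l) y
      = 1 / mTot G * fracCut G (fiberMean G t w l fun q => if y q then 1 else 0) := by
  have hneg : ∀ q, (if y q then (0 : ℝ) else 1) = 1 - if y q then 1 else 0 := fun q => by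
    cases y q <;> simp
  simp only [cutVal, mTot_blowup hwin, hneg]
  rw [sum_blowup_adj_mul, fiberMean_one_sub hwin]
  rfl

lemma gval_blowup [DecidableEq V] (hwin : ∀ v, (Win w l (bind' G t l v)).Nonempty) :
    gval (blowup G t w l) = gval G := by
  apply le_antisymm
  · refine sup'_le _ _ fun y _ => ?_
    obtain ⟨x, hx⟩ := exists_cut_ge_fracCut G univ
      (fiberMean G t w l fun q => if y q then 1 else 0)
      (fiberMean_mem_Icc _ fun q => by cases y q <;> simp) fun v hv => absurd (mem_univ v) hv
    calc cutVal (blowup G t w l) y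
        = 1 / mTot G * fracCut G (fiberMean G t w l fun q => if y q then 1 else 0) :=
          cutVal_blowup hwin y
      _ ≤ 1 / mTot G * fracCut G (fun v => if x v then 1 else 0) :=
          mul_le_mul_of_nonneg_left hx (one_div_nonneg.mpr (mTot_nonneg G))
      _ = cutVal G x := (cutVal_eq_fracCut G x).symm
      _ ≤ gval G := le_sup' _ (mem_univ x)
  · refine sup'_le _ _ fun x _ => ?_
    calc cutVal G x = cutVal (blowup G t w l) fun q => x q.1.1 := by
          rw [cutVal_blowup hwin, fiberMean_comp_fst hwin (fun v => if x v then 1 else 0),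
            cutVal_eq_fracCut]
      _ ≤ gval (blowup G t w l) := le_sup' _ (mem_univ _)

end Blowup

theorem stmt16_general (V : Type) [Fintype V] [DecidableEq V] (w l : ℕ)
    (t : ℕ → ℝ) (ht : ∀ i, i < l → t i < t (i + 1)) (ht0 : t 0 = -1) (htl : t l = 1)
    (G : WGraphOn V) :
    (∀ q : BVert G t w l,
      degOut (blowup G t w l) q
          = degOut G q.1.1 / ((Win w l (bind' G t l q.1.1)).card : ℝ) ∧
      degIn (blowup G t w l) q
          = degIn G q.1.1 / ((Win w l (bind' G t l q.1.1)).card : ℝ) ∧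
      deg (blowup G t w l) q
          = deg G q.1.1 / ((Win w l (bind' G t l q.1.1)).card : ℝ) ∧
      bias (blowup G t w l) q = bias G q.1.1) ∧
    mTot (blowup G t w l) = mTot G ∧
    gval (blowup G t w l) = gval G := by
  have hwin := Win_bind'_nonempty ht ht0 htl G w
  exact ⟨fun q => ⟨degOut_blowup hwin q, degIn_blowup hwin q, deg_blowup hwin q,
    bias_blowup hwin q⟩, mTot_blowup hwin, gval_blowup hwin⟩

theorem stmt16 (V : Type) [Fintype V] [DecidableEq V] (w l : ℕ) (hwl : w < l)
    (t : ℕ → ℝ) (ht : ∀ i, i < l → t i < t (i + 1)) (ht0 : t 0 = -1) (htl : t l = 1)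
    (G : WGraphOn V) (hm : 0 < mTot G) (hiso : ∀ v, deg G v ≠ 0) :
    (∀ q : BVert G t w l,
      degOut (blowup G t w l) q
          = degOut G q.1.1 / ((Win w l (bind' G t l q.1.1)).card : ℝ) ∧
      degIn (blowup G t w l) q
          = degIn G q.1.1 / ((Win w l (bind' G t l q.1.1)).card : ℝ) ∧
      deg (blowup G t w l) q
          = deg G q.1.1 / ((Win w l (bind' G t l q.1.1)).card : ℝ) ∧
      bias (blowup G t w l) q = bias G q.1.1) ∧
    mTot (blowup G t w l) = mTot G ∧
    gval (blowup G t w l) = gval G :=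
  stmt16_general V w l t ht ht0 htl G
end
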